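/- Fix an integer n ≥ 3. For every η > 0 there exists N₀ such that for every integer N ≥ N₀, setting h = 1/N, one has S^n_h ≥ S^n + π²/( 8(n−1)/(n(n−2)) + h + |log h| )² − η/(log h)². -/

import Mathlib

/-!
Write `m = n - 3` and `h = 1/N`. For `β > 0` the function
`K r = (m+1)/2 + β cot (β (h - log r))` solves the Riccati equation
`r K' = μ - (m+1) K + K²`, `μ = (m+1)²/4 + β²`, and is smooth on `[h, 1]` when
`β (h - log h) < π`. Then the calibration `G = -K r^(m+1) w²` satisfies
`G' = r^(m+2) w'² - μ r^m w² - r^m (r w' + K w)²`, so on every mesh cell `[kh, (k+1)h]`, `k ≥ 1`,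
`μ ∫ r^m v² ≤ ∫ r^(m+2) v'² - [G]`. On the first cell `v` is affine and the same inequality,
with boundary term `K(h) h^(m+1) v(h)²`, is a `2 × 2` quadratic-form condition. The boundary
terms telescope to `G 1 - G 0 = 0`, hence `S^n_h ≥ μ`.

With `L = |log h|`, `c = 8(n-1)/(n(n-2))` and `β = π/(c + h + L + 1/L)`, the cotangent bound
`cot x ≤ 1/x` gives `K(h) ≥ (m+1)/2 - 1/(c + 1/L)`, which makes the first-cell form definite
for large `L`, while `β² ≥ π²/(c + h + L)² - η/L²`.
-/

open MeasureTheory Real Set Filter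

noncomputable section

/-- Membership in the finite element space `V_h` with `h = 1/N`: continuous on `[0,1]`
and affine on each mesh interval `[k/N, (k+1)/N]`. -/
def MemVh (N : ℕ) (v : ℝ → ℝ) : Prop :=
  ContinuousOn v (Set.Icc 0 1) ∧
  ∀ k : ℕ, k < N → ∃ a b : ℝ,
    ∀ x ∈ Set.Icc ((k : ℝ) / (N : ℝ)) (((k : ℝ) + 1) / (N : ℝ)), v x = a * x + b

/-- The discrete Hardy constant `S^n_h` in dimension `n ≥ 3`, for `h = 1/N`. -/
def SdiscN (n N : ℕ) : ℝ :=
  sInf { s : ℝ | ∃ v : ℝ → ℝ, MemVh N v ∧ v 1 = 0 ∧ (∃ x ∈ Set.Icc (0:ℝ) 1, v x ≠ 0) ∧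
    s = (∫ r in (0:ℝ)..1, r ^ (n - 1) * (deriv v r) ^ 2)
        / (∫ r in (0:ℝ)..1, r ^ (n - 3) * (v r) ^ 2) }

open scoped Topology

def cotWeight (m : ℕ) (β h r : ℝ) : ℝ := ((m : ℝ) + 1) / 2 + β * cot (β * (h - log r))

def calibration (m : ℕ) (β h : ℝ) (w : ℝ → ℝ) (r : ℝ) : ℝ :=
  -cotWeight m β h r * r ^ (m + 1) * w r ^ 2

section Calibration

variable {m : ℕ} {β h : ℝ}

lemma sin_mul_sub_log_pos (hh : 0 < h) (hβ : 0 < β) (hπ : β * (h - log h) < π) {r : ℝ}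
    (hr : r ∈ Icc h 1) : 0 < sin (β * (h - log r)) := by
  have hr0 : 0 < r := hh.trans_le hr.1
  have hlog_le : log h ≤ log r := log_le_log hh hr.1
  have hlog_nonpos : log r ≤ 0 := log_nonpos hr0.le hr.2
  apply sin_pos_of_pos_of_lt_pi
  · nlinarith
  · nlinarith

lemma cotWeight_eq_cos_div_sin : cotWeight m β h =
    fun r => ((m : ℝ) + 1) / 2 + β * (cos (β * (h - log r)) / sin (β * (h - log r))) := by
  funext r; rw [cotWeight, cot_eq_cos_div_sin]

lemma continuousOn_cotWeight (hh : 0 < h) (hβ : 0 < β) (hπ : β * (h - log h) < π) :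
    ContinuousOn (cotWeight m β h) (Icc h 1) := by
  have hlog : ContinuousOn log (Icc h 1) :=
    continuousOn_log.mono fun r hr => (hh.trans_le hr.1).ne'
  have harg : ContinuousOn (fun r => β * (h - log r)) (Icc h 1) := by fun_prop
  rw [cotWeight_eq_cos_div_sin]
  exact continuousOn_const.add (continuousOn_const.mul ((continuous_cos.comp_continuousOn harg).div
    (continuous_sin.comp_continuousOn harg) fun r hr => (sin_mul_sub_log_pos hh hβ hπ hr).ne'))

lemma hasDerivAt_cotWeight {r : ℝ} (hr : 0 < r) (hs : sin (β * (h - log r)) ≠ 0) :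
    HasDerivAt (cotWeight m β h)
      ((((m : ℝ) + 1) ^ 2 / 4 + β ^ 2 - ((m : ℝ) + 1) * cotWeight m β h r
        + cotWeight m β h r ^ 2) / r) r := by
  have harg : HasDerivAt (fun r => β * (h - log r)) (β * -r⁻¹) r :=
    ((hasDerivAt_log hr.ne').const_sub h).const_mul β
  simp only [cotWeight_eq_cos_div_sin]
  refine (((harg.cos.div harg.sin hs).const_mul β).const_add _).congr_deriv ?_
  field_simp
  ring

lemma hasDerivAt_calibration {w : ℝ → ℝ} {w' r : ℝ} (hw : HasDerivAt w w' r) (hr : 0 < r)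
    (hs : sin (β * (h - log r)) ≠ 0) :
    HasDerivAt (calibration m β h w)
      (r ^ (m + 2) * w' ^ 2 - (((m : ℝ) + 1) ^ 2 / 4 + β ^ 2) * (r ^ m * w r ^ 2)
        - r ^ m * (r * w' + cotWeight m β h r * w r) ^ 2) r := by
  have hG := ((hasDerivAt_cotWeight (m := m) hr hs).neg.mul (hasDerivAt_pow (m + 1) r)).mul
    (hw.pow 2)
  refine hG.congr_deriv ?_
  simp only [Pi.mul_apply, Pi.neg_apply, Pi.pow_apply, Nat.add_sub_cancel]
  field_simp
  push_cast
  ring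

lemma mul_integral_le_of_calibration (hh : 0 < h) (hβ : 0 < β) (hπ : β * (h - log h) < π)
    {c d : ℝ} (hc : h ≤ c) (hcd : c ≤ d) (hd : d ≤ 1) {w w' : ℝ → ℝ}
    (hw : ∀ r ∈ Icc c d, HasDerivAt w (w' r) r) (hw' : ContinuousOn w' (Icc c d)) :
    (((m : ℝ) + 1) ^ 2 / 4 + β ^ 2) * ∫ r in c..d, r ^ m * w r ^ 2 ≤
      (∫ r in c..d, r ^ (m + 2) * w' r ^ 2)
        - (calibration m β h w d - calibration m β h w c) := by
  have hsub : Icc c d ⊆ Icc h 1 := Icc_subset_Icc hc hd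
  have hpos : ∀ r ∈ Icc c d, 0 < r := fun r hr => hh.trans_le (hc.trans hr.1)
  have hsin : ∀ r ∈ Icc c d, sin (β * (h - log r)) ≠ 0 :=
    fun r hr => (sin_mul_sub_log_pos hh hβ hπ (hsub hr)).ne'
  have hwc : ContinuousOn w (Icc c d) := fun r hr => (hw r hr).continuousAt.continuousWithinAt
  have hK := (continuousOn_cotWeight (m := m) hh hβ hπ).mono hsub
  rw [← uIcc_of_le hcd] at hw hw' hwc hK hpos hsin
  have hFTC := intervalIntegral.integral_eq_sub_of_hasDerivAt
    (fun r hr => hasDerivAt_calibration (m := m) (hw r hr) (hpos r hr) (hsin r hr))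
    (ContinuousOn.intervalIntegrable (by fun_prop))
  have hint₁ : IntervalIntegrable (fun r => r ^ (m + 2) * w' r ^ 2) volume c d :=
    ContinuousOn.intervalIntegrable (by fun_prop)
  have hint₂ : IntervalIntegrable (fun r => r ^ m * w r ^ 2) volume c d :=
    ContinuousOn.intervalIntegrable (by fun_prop)
  have hintD : IntervalIntegrable (fun r => r ^ (m + 2) * w' r ^ 2
      - (((m : ℝ) + 1) ^ 2 / 4 + β ^ 2) * (r ^ m * w r ^ 2)
      - r ^ m * (r * w' r + cotWeight m β h r * w r) ^ 2) volume c d :=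
    ContinuousOn.intervalIntegrable (by fun_prop)
  have hmono := intervalIntegral.integral_mono_on hcd hintD (hint₁.sub (hint₂.const_mul _))
    fun r hr => sub_le_self _ <|
      mul_nonneg (pow_nonneg (hh.trans_le (hc.trans hr.1)).le _) (sq_nonneg _)
  rw [hFTC, intervalIntegral.integral_sub hint₁ (hint₂.const_mul _),
    intervalIntegral.integral_const_mul] at hmono
  linarith

end Calibration

/-- The Hardy inequality on the first cell, rescaled to `[0, 1]`:
`μ ∫₀¹ r^m (a r + b)² ≤ ∫₀¹ r^(m+2) a² + κ (a + b)²`, with the integrals evaluated. -/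
def FirstCellBound (m : ℕ) (μ κ : ℝ) : Prop :=
  ∀ a b : ℝ, μ * (a ^ 2 / ((m : ℝ) + 3) + 2 * a * b / ((m : ℝ) + 2) + b ^ 2 / ((m : ℝ) + 1))
    ≤ a ^ 2 / ((m : ℝ) + 3) + κ * (a + b) ^ 2

lemma integral_pow_mul_affine_sq (m : ℕ) (a b h : ℝ) :
    ∫ r in (0:ℝ)..h, r ^ m * (a * r + b) ^ 2 = h ^ (m + 1) *
      ((a * h) ^ 2 / ((m : ℝ) + 3) + 2 * (a * h) * b / ((m : ℝ) + 2) + b ^ 2 / ((m : ℝ) + 1)) := by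
  have hexpand : ∀ r ∈ uIcc (0:ℝ) h,
      r ^ m * (a * r + b) ^ 2 = a ^ 2 * r ^ (m + 2) + 2 * a * b * r ^ (m + 1) + b ^ 2 * r ^ m :=
    fun r _ => by ring
  have hint : ∀ f : ℝ → ℝ, Continuous f → IntervalIntegrable f volume 0 h :=
    fun f hf => hf.intervalIntegrable 0 h
  rw [intervalIntegral.integral_congr hexpand, intervalIntegral.integral_add
    (hint _ (by fun_prop)) (hint _ (by fun_prop)),
    intervalIntegral.integral_add (hint _ (by fun_prop)) (hint _ (by fun_prop))]
  simp only [intervalIntegral.integral_const_mul, integral_pow]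
  push_cast
  field_simp
  ring

lemma FirstCellBound.mul_integral_le {m : ℕ} {β h μ : ℝ} (hh : 0 ≤ h)
    (hF : FirstCellBound m μ (cotWeight m β h h)) (a b : ℝ) :
    μ * ∫ r in (0:ℝ)..h, r ^ m * (a * r + b) ^ 2 ≤ (∫ r in (0:ℝ)..h, r ^ (m + 2) * a ^ 2)
      - (calibration m β h (fun r => a * r + b) h - calibration m β h (fun r => a * r + b) 0) := by
  have hscaled := mul_le_mul_of_nonneg_left (hF (a * h) b) (pow_nonneg hh (m + 1))
  have hG0 : calibration m β h (fun r => a * r + b) 0 = 0 := by simp [calibration]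
  have hpow : ∫ r in (0:ℝ)..h, r ^ (m + 2) * a ^ 2
      = h ^ (m + 1) * ((a * h) ^ 2 / ((m : ℝ) + 3)) := by
    rw [intervalIntegral.integral_mul_const, integral_pow, zero_pow (by omega)]
    push_cast
    ring
  rw [integral_pow_mul_affine_sq, hpow, hG0, calibration]
  linarith

lemma FirstCellBound.mono {m : ℕ} {μ κ κ' : ℝ} (hF : FirstCellBound m μ κ) (hκ : κ ≤ κ') :
    FirstCellBound m μ κ' := fun a b =>
  (hF a b).trans (by gcongr)

def firstCellCoeff (m : ℕ) (μ : ℝ) : ℝ :=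
  1 / ((m : ℝ) + 3) - 2 * μ / (((m : ℝ) + 3) * ((m : ℝ) + 2) * ((m : ℝ) + 1))

/-- In the variables `a` and `a + b` the first-cell form is `A a² + 2 B a (a + b) + C (a + b)²`
with `A = firstCellCoeff m μ`, `B = μ / ((m+2)(m+1))` and `C = κ - μ / (m+1)`. -/
lemma firstCellBound_of_discrim {m : ℕ} {μ κ : ℝ} (hA : 0 < firstCellCoeff m μ)
    (hdisc : (μ / (((m : ℝ) + 2) * ((m : ℝ) + 1))) ^ 2 ≤
      firstCellCoeff m μ * (κ - μ / ((m : ℝ) + 1))) :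
    FirstCellBound m μ κ := by
  intro a b
  set A := firstCellCoeff m μ
  set B := μ / (((m : ℝ) + 2) * ((m : ℝ) + 1))
  set C := κ - μ / ((m : ℝ) + 1)
  have hform : a ^ 2 / ((m : ℝ) + 3) + κ * (a + b) ^ 2
      - μ * (a ^ 2 / ((m : ℝ) + 3) + 2 * a * b / ((m : ℝ) + 2) + b ^ 2 / ((m : ℝ) + 1))
      = A * a ^ 2 + 2 * B * a * (a + b) + C * (a + b) ^ 2 := by
    simp only [A, B, C, firstCellCoeff]; field_simp; ring
  have hsq : A * (A * a ^ 2 + 2 * B * a * (a + b) + C * (a + b) ^ 2)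
      = (A * a + B * (a + b)) ^ 2 + (A * C - B ^ 2) * (a + b) ^ 2 := by ring
  have : 0 ≤ A * a ^ 2 + 2 * B * a * (a + b) + C * (a + b) ^ 2 := by
    refine nonneg_of_mul_nonneg_right ?_ hA
    rw [hsq]
    have : 0 ≤ A * C - B ^ 2 := by linarith
    positivity
  linarith

section PiecewiseAffine

variable {v : ℝ → ℝ} {a b c d : ℝ}

lemma deriv_ae_eq_of_eqOn_affine (hcd : c ≤ d) (hv : EqOn v (fun y => a * y + b) (Icc c d)) :
    ∀ᵐ r, r ∈ uIoc c d → deriv v r = a := by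
  filter_upwards [(countable_singleton d).ae_notMem volume] with r hrd hr
  rw [uIoc_of_le hcd] at hr
  have hnhds : Icc c d ∈ 𝓝 r := Icc_mem_nhds hr.1 (lt_of_le_of_ne hr.2 hrd)
  rw [(eventuallyEq_of_mem hnhds hv).deriv_eq]
  exact ((hasDerivAt_id r).const_mul a |>.add_const b).deriv.trans (mul_one a)

lemma intervalIntegrable_pow_mul_deriv_sq (k : ℕ) (hcd : c ≤ d)
    (hv : EqOn v (fun y => a * y + b) (Icc c d)) :
    IntervalIntegrable (fun r => r ^ k * deriv v r ^ 2) volume c d := by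
  refine (Continuous.intervalIntegrable (u := fun r => r ^ k * a ^ 2) (by fun_prop) c d).congr_ae ?_
  filter_upwards [(ae_restrict_iff' measurableSet_uIoc).2 (deriv_ae_eq_of_eqOn_affine hcd hv)]
    with r hr
  rw [hr]

lemma integral_pow_mul_deriv_sq (k : ℕ) (hcd : c ≤ d)
    (hv : EqOn v (fun y => a * y + b) (Icc c d)) :
    ∫ r in c..d, r ^ k * deriv v r ^ 2 = ∫ r in c..d, r ^ k * a ^ 2 :=
  intervalIntegral.integral_congr_ae <| (deriv_ae_eq_of_eqOn_affine hcd hv).mono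
    fun r hr hrI => by rw [hr hrI]

end PiecewiseAffine

lemma mul_integral_le_of_telescoping {f g : ℝ → ℝ} {x G : ℕ → ℝ} {μ : ℝ} {N : ℕ}
    (hf : ∀ k < N, IntervalIntegrable f volume (x k) (x (k + 1)))
    (hg : ∀ k < N, IntervalIntegrable g volume (x k) (x (k + 1)))
    (hcell : ∀ k < N, μ * ∫ r in x k..x (k + 1), f r ≤
      (∫ r in x k..x (k + 1), g r) - (G (k + 1) - G k)) :
    μ * ∫ r in x 0..x N, f r ≤ (∫ r in x 0..x N, g r) - (G N - G 0) := by
  rw [← intervalIntegral.sum_integral_adjacent_intervals hf,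
    ← intervalIntegral.sum_integral_adjacent_intervals hg, ← Finset.sum_range_sub, Finset.mul_sum,
    ← Finset.sum_sub_distrib]
  exact Finset.sum_le_sum fun k hk => hcell k (Finset.mem_range.1 hk)

/-- The calibration is singular inside `(0, h)` (its cotangent argument reaches `π`), so on the
first cell only its value at `h` is used, through `FirstCellBound`. -/
lemma mul_integral_le_of_eqOn_affine {m : ℕ} {β h : ℝ} (hh : 0 < h) (hβ : 0 < β)
    (hπ : β * (h - log h) < π)
    (hF : FirstCellBound m (((m : ℝ) + 1) ^ 2 / 4 + β ^ 2) (cotWeight m β h h))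
    {v : ℝ → ℝ} {a b c d : ℝ} (hcell : c = 0 ∧ d = h ∨ h ≤ c) (hcd : c ≤ d) (hd : d ≤ 1)
    (hv : EqOn v (fun y => a * y + b) (Icc c d)) :
    (((m : ℝ) + 1) ^ 2 / 4 + β ^ 2) * ∫ r in c..d, r ^ m * v r ^ 2 ≤
      (∫ r in c..d, r ^ (m + 2) * deriv v r ^ 2)
        - (calibration m β h v d - calibration m β h v c) := by
  have hG : ∀ r ∈ Icc c d, calibration m β h v r = calibration m β h (fun y => a * y + b) r :=
    fun r hr => by simp only [calibration, hv hr]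
  rw [intervalIntegral.integral_congr (g := fun r => r ^ m * (a * r + b) ^ 2)
      fun r hr => by simp only [hv (uIcc_of_le hcd ▸ hr)],
    integral_pow_mul_deriv_sq (m + 2) hcd hv, hG d ⟨hcd, le_rfl⟩, hG c ⟨le_rfl, hcd⟩]
  rcases hcell with ⟨rfl, rfl⟩ | hc
  · exact hF.mul_integral_le hh.le a b
  · exact mul_integral_le_of_calibration hh hβ hπ hc hcd hd (w' := fun _ => a)
      (fun r _ => (((hasDerivAt_id r).const_mul a).add_const b).congr_deriv (mul_one a))
      continuousOn_const

theorem mul_integral_le_of_memVh {m N : ℕ} {β : ℝ} (hN : 0 < N) (hβ : 0 < β)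
    (hπ : β * (1 / (N : ℝ) - log (1 / N)) < π)
    (hF : FirstCellBound m (((m : ℝ) + 1) ^ 2 / 4 + β ^ 2) (cotWeight m β (1 / N) (1 / N)))
    {v : ℝ → ℝ} (hv : MemVh N v) (hv1 : v 1 = 0) :
    (((m : ℝ) + 1) ^ 2 / 4 + β ^ 2) * ∫ r in (0:ℝ)..1, r ^ m * v r ^ 2 ≤
      ∫ r in (0:ℝ)..1, r ^ (m + 2) * deriv v r ^ 2 := by
  set x : ℕ → ℝ := fun k => k / N with hx
  have hN' : (0 : ℝ) < N := Nat.cast_pos.2 hN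
  have hx0 : x 0 = 0 := by simp [hx]
  have hxN : x N = 1 := div_self hN'.ne'
  have hpiece : ∀ k < N, ∃ a b, EqOn v (fun y => a * y + b) (Icc (x k) (x (k + 1))) := by
    intro k hk
    obtain ⟨a, b, hab⟩ := hv.2 k hk
    exact ⟨a, b, fun y hy => hab y (by simpa [hx] using hy)⟩
  have hmono : ∀ k, x k ≤ x (k + 1) := fun k => by
    simp only [hx]; gcongr; linarith
  have hle1 : ∀ k < N, x (k + 1) ≤ 1 := fun k hk => by
    rw [hx, div_le_one hN']; exact_mod_cast hk
  have hsub : ∀ k < N, uIcc (x k) (x (k + 1)) ⊆ Icc 0 1 := fun k hk => by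
    rw [uIcc_of_le (hmono k)]
    exact Icc_subset_Icc (by simp only [hx]; positivity) (hle1 k hk)
  have key := mul_integral_le_of_telescoping (x := x)
    (G := fun k => calibration m β (1 / N) v (x k)) (f := fun r => r ^ m * v r ^ 2)
    (g := fun r => r ^ (m + 2) * deriv v r ^ 2) (μ := ((m : ℝ) + 1) ^ 2 / 4 + β ^ 2)
    (fun k hk => ContinuousOn.intervalIntegrable
      ((continuousOn_pow m).mul ((hv.1.mono (hsub k hk)).pow 2)))
    (fun k hk => by
      obtain ⟨a, b, hab⟩ := hpiece k hk
      exact intervalIntegrable_pow_mul_deriv_sq (m + 2) (hmono k) hab)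
    (fun k hk => by
      obtain ⟨a, b, hab⟩ := hpiece k hk
      refine mul_integral_le_of_eqOn_affine (by positivity) hβ hπ hF ?_ (hmono k) (hle1 k hk) hab
      rcases Nat.eq_zero_or_pos k with rfl | hk1
      · exact Or.inl ⟨hx0, by simp [hx]⟩
      · exact Or.inr (by simp only [hx]; gcongr; exact_mod_cast hk1))
  have hG0 : calibration m β (1 / N) v 0 = 0 := by simp [calibration]
  have hG1 : calibration m β (1 / N) v 1 = 0 := by simp [calibration, hv1]
  simpa only [hx0, hxN, hG0, hG1, sub_zero] using key

lemma integral_pow_mul_sq_pos (k : ℕ) {v : ℝ → ℝ} (hv : ContinuousOn v (Icc 0 1))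
    (hne : ∃ x ∈ Icc (0 : ℝ) 1, v x ≠ 0) : 0 < ∫ r in (0:ℝ)..1, r ^ k * v r ^ 2 := by
  obtain ⟨x, hx, hvx⟩ : ∃ x ∈ Ioc (0 : ℝ) 1, v x ≠ 0 := by
    by_contra! hzero
    obtain ⟨x, hx, hvx⟩ := hne
    exact hvx (EqOn.of_subset_closure (g := 0) hzero hv continuousOn_const Ioc_subset_Icc_self
      (by rw [closure_Ioc zero_ne_one]) hx)
  refine intervalIntegral.integral_pos zero_lt_one (by fun_prop)
    (fun r hr => by have := hr.1.le; positivity) ⟨x, Ioc_subset_Icc_self hx, ?_⟩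
  have := hx.1
  positivity

lemma le_SdiscN {m N : ℕ} {c : ℝ}
    (h : ∀ v, MemVh N v → v 1 = 0 → (∃ x ∈ Icc (0 : ℝ) 1, v x ≠ 0) →
      c * ∫ r in (0:ℝ)..1, r ^ m * v r ^ 2 ≤ ∫ r in (0:ℝ)..1, r ^ (m + 2) * deriv v r ^ 2) :
    c ≤ SdiscN (m + 3) N := by
  have hone_sub : MemVh N (fun x => 1 - x) :=
    ⟨by fun_prop, fun _ _ => ⟨-1, 1, fun x _ => by ring⟩⟩
  refine le_csInf ⟨_, _, hone_sub, by norm_num, ⟨0, by norm_num, by norm_num⟩, rfl⟩ ?_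
  rintro s ⟨v, hv, hv1, hne, rfl⟩
  rw [show m + 3 - 1 = m + 2 by omega, show m + 3 - 3 = m by omega,
    le_div_iff₀ (integral_pow_mul_sq_pos m hv.1 hne)]
  exact h v hv hv1 hne

lemma cot_le_inv_self {x : ℝ} (hx₀ : 0 < x) (hxπ : x < π) : cot x ≤ x⁻¹ := by
  have hsin : 0 < sin x := sin_pos_of_pos_of_lt_pi hx₀ hxπ
  rw [cot_eq_cos_div_sin, div_le_iff₀ hsin]
  rcases lt_or_ge x (π / 2) with hx | hx
  · have htan := lt_tan hx₀ hx
    have hcos : 0 < cos x := cos_pos_of_mem_Ioo ⟨by linarith, hx⟩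
    rw [tan_eq_sin_div_cos, lt_div_iff₀ hcos] at htan
    rw [inv_mul_eq_div, le_div_iff₀ hx₀]
    linarith
  · have hcos : cos x ≤ 0 := cos_nonpos_of_pi_div_two_le_of_le hx (by linarith)
    have : 0 ≤ x⁻¹ * sin x := by positivity
    linarith

lemma mul_lt_pi_and_cotWeight_ge {m : ℕ} {h s : ℝ} (hθ : 0 < h - log h) (hs : 0 < s) :
    π / (h - log h + s) * (h - log h) < π ∧
      ((m : ℝ) + 1) / 2 - 1 / s ≤ cotWeight m (π / (h - log h + s)) h h := by
  set β := π / (h - log h + s)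
  have hβ : 0 < β := by positivity
  have hβθ : β * (h - log h) = π - β * s := by
    simp only [β]; field_simp; ring
  have hβs : β * s < π := by
    have : 0 < β * (h - log h) := by positivity
    linarith
  refine ⟨by linarith [mul_pos hβ hs], ?_⟩
  have hcot : cot (π - β * s) = -cot (β * s) := by
    rw [cot_eq_cos_div_sin, cot_eq_cos_div_sin, cos_pi_sub, sin_pi_sub, neg_div]
  have hbound := mul_le_mul_of_nonneg_left (cot_le_inv_self (by positivity) hβs) hβ.le
  rw [mul_inv, ← mul_assoc, mul_inv_cancel₀ hβ.ne', one_mul] at hbound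
  rw [cotWeight, hβθ, hcot, one_div]
  linarith

def firstCellConst (m : ℕ) : ℝ := 8 * ((m : ℝ) + 2) / (((m : ℝ) + 3) * ((m : ℝ) + 1))

lemma firstCellConst_pos (m : ℕ) : 0 < firstCellConst m := by
  unfold firstCellConst; positivity

section FirstCellAsymptotics

variable {m : ℕ} {β μ : ℝ}

lemma firstCellCoeff_eq (hμ : μ = ((m : ℝ) + 1) ^ 2 / 4 + β ^ 2) :
    firstCellCoeff m μ
      = 1 / (2 * ((m : ℝ) + 2)) - 2 * β ^ 2 / (((m : ℝ) + 1) * ((m : ℝ) + 2) * ((m : ℝ) + 3)) := by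
  rw [firstCellCoeff, hμ]
  field_simp
  ring

/-- `firstCellConst m` is exactly the `c` for which the first-cell defect `A C - B²` vanishes at
`β = t = 0`; what is left at `β = 0` is the surplus `A t / (c (c + t))`, of order `t`. -/
lemma firstCell_discr_eq (hμ : μ = ((m : ℝ) + 1) ^ 2 / 4 + β ^ 2) {t : ℝ} (ht : 0 ≤ t) :
    firstCellCoeff m μ * (((m : ℝ) + 1) / 2 - 1 / (firstCellConst m + t) - μ / ((m : ℝ) + 1))
      - (μ / (((m : ℝ) + 2) * ((m : ℝ) + 1))) ^ 2
      = β ^ 2 * (β ^ 2 + ((m : ℝ) + 1) ^ 2 / 4)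
          / (((m : ℝ) + 1) * ((m : ℝ) + 2) ^ 2 * ((m : ℝ) + 3))
        - (3 * (m : ℝ) + 5) / (2 * ((m : ℝ) + 1) * ((m : ℝ) + 2) * ((m : ℝ) + 3)) * β ^ 2
        + firstCellCoeff m μ * (t / (firstCellConst m * (firstCellConst m + t))) := by
  have hc := firstCellConst_pos m
  rw [firstCellCoeff, hμ]
  simp only [firstCellConst] at hc ⊢
  field_simp
  ring

end FirstCellAsymptotics

lemma eventually_firstCellBound (m : ℕ) : ∀ᶠ L in atTop, ∀ β, 0 ≤ β → β ≤ π / L →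
    FirstCellBound m (((m : ℝ) + 1) ^ 2 / 4 + β ^ 2)
      (((m : ℝ) + 1) / 2 - 1 / (firstCellConst m + 1 / L)) := by
  set c := firstCellConst m
  have hc : 0 < c := firstCellConst_pos m
  set γ : ℝ := (3 * (m : ℝ) + 5) / (2 * ((m : ℝ) + 1) * ((m : ℝ) + 2) * ((m : ℝ) + 3))
  set ν : ℝ := 1 / (4 * ((m : ℝ) + 2) * c * (c + 1))
  have hν : 0 < ν := by positivity
  filter_upwards [eventually_ge_atTop 1,
    eventually_ge_atTop (8 * π ^ 2 / (((m : ℝ) + 1) * ((m : ℝ) + 3))),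
    eventually_ge_atTop (γ * π ^ 2 / ν)] with L hL₁ hL₂ hL₃ β hβ hβL
  set t := 1 / L with ht_def
  have hL : 0 < L := by linarith
  have ht : 0 < t := by positivity
  have ht₁ : t ≤ 1 := by rw [ht_def, div_le_one hL]; exact hL₁
  have hβt : β ^ 2 ≤ π ^ 2 * t ^ 2 := by
    rw [← mul_pow]
    exact pow_le_pow_left₀ hβ (by rwa [ht_def, mul_one_div]) 2
  have hπt₂ : π ^ 2 * t ≤ ((m : ℝ) + 1) * ((m : ℝ) + 3) / 8 := by
    rw [div_le_iff₀ (by positivity)] at hL₂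
    rw [ht_def, mul_one_div, div_le_iff₀ hL]
    nlinarith
  have hπt₃ : γ * π ^ 2 * t ≤ ν := by
    rw [div_le_iff₀ hν] at hL₃
    rw [ht_def, mul_one_div, div_le_iff₀ hL]
    linarith
  have hβsmall : 8 * β ^ 2 ≤ ((m : ℝ) + 1) * ((m : ℝ) + 3) := by nlinarith
  set A := firstCellCoeff m (((m : ℝ) + 1) ^ 2 / 4 + β ^ 2)
  have hA : 1 / (4 * ((m : ℝ) + 2)) ≤ A := by
    have hβ₂ : 2 * β ^ 2 / (((m : ℝ) + 1) * ((m : ℝ) + 2) * ((m : ℝ) + 3))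
        ≤ 1 / (4 * ((m : ℝ) + 2)) := by
      rw [div_le_div_iff₀ (by positivity) (by positivity)]
      nlinarith [mul_le_mul_of_nonneg_right hβsmall (by positivity : (0 : ℝ) ≤ (m : ℝ) + 2)]
    have hsplit : 1 / (4 * ((m : ℝ) + 2)) = 1 / (2 * ((m : ℝ) + 2)) - 1 / (4 * ((m : ℝ) + 2)) := by
      field_simp; ring
    linarith [show A = _ from firstCellCoeff_eq rfl]
  have hsurplus : ν * t ≤ A * (t / (c * (c + t))) :=
    calc ν * t = 1 / (4 * ((m : ℝ) + 2)) / (c * (c + 1)) * t := by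
          simp only [ν]; field_simp
      _ ≤ A / (c * (c + t)) * t := by
          have : 0 ≤ A := le_trans (by positivity) hA
          gcongr
      _ = A * (t / (c * (c + t))) := by ring
  refine firstCellBound_of_discrim (hA.trans_lt' (by positivity)) ?_
  rw [← sub_nonneg, firstCell_discr_eq rfl ht.le]
  have : 0 ≤ β ^ 2 * (β ^ 2 + ((m : ℝ) + 1) ^ 2 / 4)
      / (((m : ℝ) + 1) * ((m : ℝ) + 2) ^ 2 * ((m : ℝ) + 3)) := by positivity
  nlinarith [mul_le_mul_of_nonneg_left hβt (by positivity : 0 ≤ γ),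
    mul_le_mul_of_nonneg_left hπt₃ ht.le]

lemma eventually_sq_sub_le {η : ℝ} (hη : 0 < η) : ∀ᶠ L in atTop, ∀ e : ℝ, 0 ≤ e →
    π ^ 2 / (e + L) ^ 2 - η / L ^ 2 ≤ (π / (e + L + 1 / L)) ^ 2 := by
  filter_upwards [eventually_ge_atTop 1, eventually_ge_atTop (2 * π ^ 2 / η)]
    with L hL₁ hL₂ e he
  have hL : 0 < L := by linarith
  set E := e + L
  have hE : L ≤ E := by simp only [E]; linarith
  have hE₀ : 0 < E := hL.trans_le hE
  have hdiff : π ^ 2 / E ^ 2 - (π / (E + 1 / L)) ^ 2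
      = π ^ 2 * (2 * E + 1 / L) / (L * E ^ 2 * (E + 1 / L) ^ 2) := by
    field_simp
    ring
  have hbound : π ^ 2 * (2 * E + 1 / L) / (L * E ^ 2 * (E + 1 / L) ^ 2) ≤ 2 * π ^ 2 / L ^ 4 :=
    calc π ^ 2 * (2 * E + 1 / L) / (L * E ^ 2 * (E + 1 / L) ^ 2)
        ≤ π ^ 2 * (2 * (E + 1 / L)) / (L * E ^ 2 * (E + 1 / L) ^ 2) := by
          gcongr; linarith [show 0 < 1 / L by positivity]
      _ = 2 * π ^ 2 / (L * E ^ 2 * (E + 1 / L)) := by field_simp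
      _ ≤ 2 * π ^ 2 / (L * L ^ 2 * L) := by
          gcongr; linarith [show 0 < 1 / L by positivity]
      _ = 2 * π ^ 2 / L ^ 4 := by ring
  have hη' : 2 * π ^ 2 / L ^ 4 ≤ η / L ^ 2 := by
    rw [div_le_iff₀ hη] at hL₂
    rw [div_le_div_iff₀ (by positivity) (by positivity)]
    have hL23 : L ^ 2 ≤ L ^ 3 := pow_le_pow_right₀ hL₁ (by norm_num)
    nlinarith [mul_le_mul_of_nonneg_right hL₂ (pow_nonneg hL.le 3),
      mul_le_mul_of_nonneg_left hL23 (by positivity : (0 : ℝ) ≤ 2 * π ^ 2)]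
  linarith

lemma le_SdiscN_of_firstCellBound {m N : ℕ} (hL : 0 < log N)
    (hF : ∀ β, 0 ≤ β → β ≤ π / log N → FirstCellBound m (((m : ℝ) + 1) ^ 2 / 4 + β ^ 2)
      (((m : ℝ) + 1) / 2 - 1 / (firstCellConst m + 1 / log N))) :
    ((m : ℝ) + 1) ^ 2 / 4 + (π / (firstCellConst m + 1 / N + log N + 1 / log N)) ^ 2
      ≤ SdiscN (m + 3) N := by
  have hN : 0 < N := Nat.pos_of_ne_zero fun h => by simp [h] at hL
  have hlog_inv : log (1 / (N : ℝ)) = -log N := by rw [one_div, log_inv]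
  have hc := firstCellConst_pos m
  set β := π / (firstCellConst m + 1 / N + log N + 1 / log N)
  have hβ_eq : β = π / (1 / N - log (1 / N) + (firstCellConst m + 1 / log N)) := by
    rw [hlog_inv]; simp only [β]; congr 1; ring
  obtain ⟨hπ, hK⟩ := mul_lt_pi_and_cotWeight_ge (m := m) (h := 1 / (N : ℝ))
    (by rw [hlog_inv, sub_neg_eq_add]; positivity)
    (by positivity : 0 < firstCellConst m + 1 / log N)
  rw [← hβ_eq] at hπ hK
  have hβL : β ≤ π / log N := div_le_div_of_nonneg_left pi_pos.le hL
    (by linarith [show 0 < 1 / (N : ℝ) by positivity, show 0 < 1 / log N by positivity])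
  exact le_SdiscN fun v hv hv1 _ => mul_integral_le_of_memVh hN (by positivity) hπ
    ((hF β (by positivity) hβL).mono hK) hv hv1

theorem discrete_hardy_nd_lower_bound (n : ℕ) (hn : 3 ≤ n) :
    ∀ η : ℝ, 0 < η → ∃ N₀ : ℕ, ∀ N : ℕ, N₀ ≤ N →
      SdiscN n N ≥ ((n : ℝ) - 2) ^ 2 / 4
        + π ^ 2 / (8 * ((n : ℝ) - 1) / ((n : ℝ) * ((n : ℝ) - 2)) + 1 / (N : ℝ)
            + |Real.log (1 / (N : ℝ))|) ^ 2
        - η / (Real.log (1 / (N : ℝ))) ^ 2 := by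
  intro η hη
  obtain ⟨m, rfl⟩ : ∃ m, n = m + 3 := ⟨n - 3, by omega⟩
  have hlog : Tendsto (fun N : ℕ => log N) atTop atTop :=
    tendsto_log_atTop.comp tendsto_natCast_atTop_atTop
  obtain ⟨N₀, hN₀⟩ := eventually_atTop.1 <| hlog.eventually <|
    (eventually_gt_atTop 0).and ((eventually_firstCellBound m).and (eventually_sq_sub_le hη))
  refine ⟨N₀, fun N hN => ?_⟩
  obtain ⟨hL, hF, hsq⟩ := hN₀ N hN
  have hc : 8 * ((m : ℝ) + 3 - 1) / (((m : ℝ) + 3) * ((m : ℝ) + 3 - 2)) = firstCellConst m := by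
    rw [firstCellConst]; ring_nf
  have hlog_inv : log (1 / (N : ℝ)) = -log N := by rw [one_div, log_inv]
  push_cast
  rw [hc, hlog_inv, abs_neg, abs_of_pos hL, neg_sq]
  linarith [le_SdiscN_of_firstCellBound hL hF,
    hsq (firstCellConst m + 1 / N) (add_nonneg (firstCellConst_pos m).le (by positivity))]
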